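/- arXiv:2106.02573 — 4 statements merged into one kernel-verified Lean document; each statement's English description precedes it below -/
import Mathlib

section
/- Let f : A → B and g : B → D be injective homomorphisms of finite undirected multigraphs. Define the multigraph C by V_C = (V_D ∖ g_V(V_B)) ∪ g_V(f_V(V_A)) and E_C = { x ∈ E_D | (x ∉ g_E(E_B) or x ∈ g_E(f_E(E_A))) and both endpoints of x (the entries of i_D(x)) lie in V_C }, with incidence map the restriction of i_D; let φ_D : C → D be the inclusion homomorphism and φ_C : A → C the corestriction of g ∘ f. Then φ_C and φ_D are injective homomorphisms, the square commutes (g ∘ f = φ_D ∘ φ_C), and the square is a pullback: for every finite undirected multigraph W and homomorphisms p : W → B, q : W → C with g ∘ p = φ_D ∘ q, there exists a unique homomorphism w : W → A with f ∘ w = p and φ_C ∘ w = q. -/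
/-- A finite undirected multigraph: a finite vertex set, a finite edge set, and an
incidence map assigning to each edge its unordered pair of endpoints (loops allowed). -/
structure MG where
  V : Type
  E : Type
  finV : Finite V
  finE : Finite E
  inc : E → Sym2 V

/-- A homomorphism of finite undirected multigraphs: a pair of maps on vertices and edges
compatible with the incidence maps. -/
structure MG.Hom (G H : MG) where
  vmap : G.V → H.V
  emap : G.E → H.E
  comm : ∀ e, H.inc (emap e) = Sym2.map vmap (G.inc e)

/-- A homomorphism is injective if both its components are injective. -/
def MG.Hom.Injective {G H : MG} (φ : G.Hom H) : Prop :=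
  Function.Injective φ.vmap ∧ Function.Injective φ.emap

/-- A homomorphism is surjective if both its components are surjective. -/
def MG.Hom.Surjective {G H : MG} (φ : G.Hom H) : Prop :=
  Function.Surjective φ.vmap ∧ Function.Surjective φ.emap

/-- A homomorphism is an isomorphism if both its components are bijective. -/
def MG.Hom.IsIso {G H : MG} (φ : G.Hom H) : Prop :=
  Function.Bijective φ.vmap ∧ Function.Bijective φ.emap

/-- Composition of homomorphisms of multigraphs. -/
def MG.Hom.comp {G H K : MG} (ψ : H.Hom K) (φ : G.Hom H) : G.Hom K where
  vmap := ψ.vmap ∘ φ.vmap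
  emap := ψ.emap ∘ φ.emap
  comm := by
    intro e
    simp only [Function.comp_apply, ψ.comm, φ.comm, Sym2.map_map]

/-- Any unordered pair all of whose entries satisfy a predicate `p` lifts to an
unordered pair of elements of the subtype of `p`. -/
lemma sym2_restrict_exists {α : Type} {p : α → Prop} (s : Sym2 α) (h : ∀ a ∈ s, p a) :
    ∃ t : Sym2 {a // p a}, Sym2.map Subtype.val t = s := by
  revert h
  induction s using Sym2.ind with
  | _ x y =>
    intro h
    exact ⟨s(⟨x, h x (by simp)⟩, ⟨y, h y (by simp)⟩), by simp⟩

namespace MG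

variable {A B D : MG}

/-- The vertex set `(V_D ∖ g_V(V_B)) ∪ g_V(f_V(V_A))` of the final pullback
complement of `g ∘ f`. -/
def fpcV (f : A.Hom B) (g : B.Hom D) : Set D.V :=
  (Set.range g.vmap)ᶜ ∪ Set.range (g.vmap ∘ f.vmap)

/-- The edge set of the final pullback complement of `g ∘ f`: the edges of `D` that
are not in `g_E(E_B)` unless they are in `g_E(f_E(E_A))`, and both of whose endpoints
lie in the vertex set `fpcV f g`. -/
def fpcE (f : A.Hom B) (g : B.Hom D) : Set D.E :=
  {x | (x ∉ Set.range g.emap ∨ x ∈ Set.range (g.emap ∘ f.emap)) ∧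
    ∀ w ∈ D.inc x, w ∈ fpcV f g}

/-- The final-pullback-complement object `C`: the multigraph with vertex set `fpcV f g`,
edge set `fpcE f g`, and incidence map the restriction of that of `D`. -/
noncomputable def fpc (f : A.Hom B) (g : B.Hom D) : MG where
  V := {v : D.V // v ∈ fpcV f g}
  E := {x : D.E // x ∈ fpcE f g}
  finV := by have := D.finV; exact inferInstance
  finE := by have := D.finE; exact inferInstance
  inc := fun x => (sym2_restrict_exists (D.inc x.val) x.prop.2).choose

lemma fpc_inc_spec (f : A.Hom B) (g : B.Hom D) (x : (fpc f g).E) :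
    Sym2.map Subtype.val ((fpc f g).inc x) = D.inc x.val :=
  (sym2_restrict_exists (D.inc x.val) x.prop.2).choose_spec

/-- The inclusion homomorphism `φ_D : C → D`. -/
noncomputable def fpcToD (f : A.Hom B) (g : B.Hom D) : (fpc f g).Hom D where
  vmap := Subtype.val
  emap := Subtype.val
  comm := fun x => (fpc_inc_spec f g x).symm

lemma fpc_vmem (f : A.Hom B) (g : B.Hom D) (a : A.V) :
    g.vmap (f.vmap a) ∈ fpcV f g :=
  Or.inr ⟨a, rfl⟩

lemma fpc_emem (f : A.Hom B) (g : B.Hom D) (e : A.E) :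
    g.emap (f.emap e) ∈ fpcE f g := by
  constructor
  · exact Or.inr ⟨e, rfl⟩
  · intro w hw
    rw [g.comm, f.comm, Sym2.map_map] at hw
    rcases Sym2.mem_map.mp hw with ⟨a, _, ha⟩
    exact Or.inr ⟨a, ha⟩

/-- The corestriction `φ_C : A → C` of `g ∘ f`. -/
noncomputable def fpcFromA (f : A.Hom B) (g : B.Hom D) : A.Hom (fpc f g) where
  vmap := fun a => ⟨g.vmap (f.vmap a), fpc_vmem f g a⟩
  emap := fun e => ⟨g.emap (f.emap e), fpc_emem f g e⟩
  comm := by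
    intro e
    apply Sym2.map.injective (Subtype.val_injective)
    refine (fpc_inc_spec f g _).trans ?_
    show D.inc (g.emap (f.emap e)) = _
    rw [g.comm, f.comm, Sym2.map_map]
    exact Eq.symm (Sym2.map_map ..)

end MG

/-!
A vertex or edge of `B` whose image under `g` survives in `C` must come from `A`: the part of
`D` that `C` keeps inside `g(B)` is exactly `g(f(A))`. So the `B`-component `p` of a cone over
the cospan factors through the injective `f`, and the `C`-component follows because the
inclusion `C → D` is a monomorphism.
-/

namespace MG.Hom

variable {G H K W : MG}

@[ext]
lemma ext {φ ψ : G.Hom H} (hV : φ.vmap = ψ.vmap) (hE : φ.emap = ψ.emap) : φ = ψ := by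
  cases φ; cases ψ; congr

lemma comp_assoc (χ : K.Hom W) (ψ : H.Hom K) (φ : G.Hom H) :
    (χ.comp ψ).comp φ = χ.comp (ψ.comp φ) :=
  rfl

lemma Injective.comp {ψ : H.Hom K} {φ : G.Hom H} (hψ : ψ.Injective) (hφ : φ.Injective) :
    (ψ.comp φ).Injective :=
  ⟨hψ.1.comp hφ.1, hψ.2.comp hφ.2⟩

lemma Injective.of_comp {ψ : H.Hom K} {φ : G.Hom H} (h : (ψ.comp φ).Injective) :
    φ.Injective :=
  ⟨Function.Injective.of_comp (f := ψ.vmap) h.1, Function.Injective.of_comp (f := ψ.emap) h.2⟩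

lemma Injective.cancel_left {ψ : H.Hom K} {φ₁ φ₂ : G.Hom H} (hψ : ψ.Injective)
    (h : ψ.comp φ₁ = ψ.comp φ₂) : φ₁ = φ₂ := by
  ext x
  · exact hψ.1 (congrFun (congrArg vmap h) x)
  · exact hψ.2 (congrFun (congrArg emap h) x)

lemma exists_comp_eq_of_range_subset {φ : G.Hom H} (hφ : Function.Injective φ.vmap)
    (p : W.Hom H) (hV : Set.range p.vmap ⊆ Set.range φ.vmap)
    (hE : Set.range p.emap ⊆ Set.range φ.emap) : ∃ w : W.Hom G, φ.comp w = p := by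
  choose wV hwV using fun v => hV ⟨v, rfl⟩
  choose wE hwE using fun e => hE ⟨e, rfl⟩
  have hφwV : φ.vmap ∘ wV = p.vmap := funext hwV
  refine ⟨⟨wV, wE, fun e => Sym2.map.injective hφ ?_⟩, ext hφwV (funext hwE)⟩
  rw [← φ.comm, hwE, p.comm, Sym2.map_map, hφwV]

end MG.Hom

namespace MG

variable {A B D : MG} (f : A.Hom B) (g : B.Hom D)

lemma fpcToD_comp_fpcFromA : (fpcToD f g).comp (fpcFromA f g) = g.comp f :=
  rfl

lemma fpcToD_injective : (fpcToD f g).Injective :=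
  ⟨Subtype.val_injective, Subtype.val_injective⟩

lemma preimage_fpcV {g : B.Hom D} (hg : Function.Injective g.vmap) :
    g.vmap ⁻¹' fpcV f g = Set.range f.vmap := by
  ext b
  constructor
  · rintro (hb | ⟨a, hab⟩)
    · exact absurd ⟨b, rfl⟩ hb
    · exact ⟨a, hg hab⟩
  · rintro ⟨a, rfl⟩
    exact fpc_vmem f g a

lemma preimage_fpcE {g : B.Hom D} (hg : Function.Injective g.emap) :
    g.emap ⁻¹' fpcE f g = Set.range f.emap := by
  ext b
  constructor
  · rintro ⟨hb | ⟨a, hab⟩, -⟩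
    · exact absurd ⟨b, rfl⟩ hb
    · exact ⟨a, hg hab⟩
  · rintro ⟨a, rfl⟩
    exact fpc_emem f g a

lemma range_subset_of_comp_eq_fpcToD_comp {g : B.Hom D} (hg : g.Injective) {W : MG}
    {p : W.Hom B} {q : W.Hom (fpc f g)} (hpq : g.comp p = (fpcToD f g).comp q) :
    Set.range p.vmap ⊆ Set.range f.vmap ∧ Set.range p.emap ⊆ Set.range f.emap := by
  constructor
  · rintro _ ⟨v, rfl⟩
    rw [← preimage_fpcV f hg.1, Set.mem_preimage]
    exact congrFun (congrArg Hom.vmap hpq) v ▸ (q.vmap v).2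
  · rintro _ ⟨e, rfl⟩
    rw [← preimage_fpcE f hg.2, Set.mem_preimage]
    exact congrFun (congrArg Hom.emap hpq) e ▸ (q.emap e).2

end MG

/-- **The constructed square is a pullback, and its morphisms are injective.** For
composable injective homomorphisms `f : A → B`, `g : B → D` of finite undirected
multigraphs, the corestriction `φ_C : A → C` and inclusion `φ_D : C → D` of the explicit
final-pullback-complement construction are injective, the square commutes
(`g ∘ f = φ_D ∘ φ_C`), and the square is a pullback. -/
theorem mg_fpc_is_pullback (A B D : MG) (f : A.Hom B) (g : B.Hom D)
    (hf : f.Injective) (hg : g.Injective) :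
    (MG.fpcFromA f g).Injective ∧ (MG.fpcToD f g).Injective ∧
    g.comp f = (MG.fpcToD f g).comp (MG.fpcFromA f g) ∧
    ∀ (W : MG) (p : W.Hom B) (q : W.Hom (MG.fpc f g)),
      g.comp p = (MG.fpcToD f g).comp q →
      ∃! w : W.Hom A, f.comp w = p ∧ (MG.fpcFromA f g).comp w = q := by
  have hcomm := MG.fpcToD_comp_fpcFromA f g
  have hφD := MG.fpcToD_injective f g
  have hφC : (MG.fpcFromA f g).Injective := (hcomm.symm ▸ hg.comp hf).of_comp
  refine ⟨hφC, hφD, hcomm.symm, fun W p q hpq => ?_⟩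
  obtain ⟨hV, hE⟩ := MG.range_subset_of_comp_eq_fpcToD_comp f hg hpq
  obtain ⟨w, hw⟩ := f.exists_comp_eq_of_range_subset hf.1 p hV hE
  refine ⟨w, ⟨hw, hφD.cancel_left ?_⟩, fun w' hw' => hf.cancel_left (hw'.1.trans hw.symm)⟩
  rw [← MG.Hom.comp_assoc, hcomm, MG.Hom.comp_assoc, hw, hpq]
end

section
/- Let A, B, C be finite undirected multigraphs that are simple (their incidence maps are injective), and let m : A → B and n : A → C be injective, edge-reflecting homomorphisms. Define the pushout multigraph D by V_D = V_B ⊕ (V_C ∖ n_V(V_A)) and E_D = E_B ⊕ (E_C ∖ n_E(E_A)), where the incidence map i_D acts as i_B on edges from E_B and on an edge x ∈ E_C ∖ n_E(E_A) is given by applying Sym2.map ψ to i_C(x), with ψ : V_C → V_D sending n_V(a) to the left copy of m_V(a) for each a ∈ V_A and every other vertex to its right copy. Then D is simple, i.e., its incidence map i_D is injective. -/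
/-- A multigraph is simple if its incidence map is injective: no two distinct edges have
the same unordered pair of endpoints. -/
def MG.IsSimple (G : MG) : Prop := Function.Injective G.inc

/-- An injective homomorphism is edge-reflecting if every edge of the codomain all of
whose endpoints lie in the image of the vertex map lies in the image of the edge map. -/
def MG.Hom.EdgeReflecting {G H : MG} (φ : G.Hom H) : Prop :=
  ∀ e' : H.E, (∀ w ∈ H.inc e', w ∈ Set.range φ.vmap) → e' ∈ Set.range φ.emap

namespace MG

variable {A B C : MG}

open Classical in
/-- The vertex map `ψ : V_C → V_B ⊕ (V_C ∖ n_V(V_A))` of the pushout construction: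
it sends `n_V(a)` to the left copy of `m_V(a)` for each `a ∈ V_A`, and every other
vertex of `C` to its right copy. -/
noncomputable def pushoutVmap (m : A.Hom B) (n : A.Hom C) (v : C.V) :
    B.V ⊕ {v : C.V // v ∉ Set.range n.vmap} :=
  if h : v ∈ Set.range n.vmap then Sum.inl (m.vmap h.choose) else Sum.inr ⟨v, h⟩

/-- The pushout multigraph `D` of the span `B ← A → C` (along `m` and `n`):
`V_D = V_B ⊕ (V_C ∖ n_V(V_A))`, `E_D = E_B ⊕ (E_C ∖ n_E(E_A))`, with incidence acting
as in `B` on edges from `E_B`, and on an edge `x ∈ E_C ∖ n_E(E_A)` by applying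
`Sym2.map (pushoutVmap m n)` to `i_C(x)`. -/
noncomputable def pushout (m : A.Hom B) (n : A.Hom C) : MG where
  V := B.V ⊕ {v : C.V // v ∉ Set.range n.vmap}
  E := B.E ⊕ {x : C.E // x ∉ Set.range n.emap}
  finV := by have := B.finV; have := C.finV; exact inferInstance
  finE := by have := B.finE; have := C.finE; exact inferInstance
  inc := Sum.elim (fun e => Sym2.map Sum.inl (B.inc e))
    (fun x => Sym2.map (pushoutVmap m n) (C.inc x.val))

end MG

/-!
A vertex of `C` outside the image of `n` is kept as a right copy, so the vertex map of the
pushout is injective as soon as `m` is, and edges coming from `B` resp. from `C` have distinct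
endpoints among themselves. An edge of `C` outside the image of `n` cannot have the same
endpoints as an edge of `B`: all its endpoints would then be left copies, i.e. lie in the image
of `n`, and edge reflection would put the edge itself into the image of `n`.
-/

namespace MG

variable {A B C : MG} {m : A.Hom B} {n : A.Hom C}

theorem pushoutVmap_of_notMem_range {v : C.V} (hv : v ∉ Set.range n.vmap) :
    pushoutVmap m n v = Sum.inr ⟨v, hv⟩ :=
  dif_neg hv

theorem pushoutVmap_injective (hm : Function.Injective m.vmap) :
    Function.Injective (pushoutVmap m n) := by
  intro v w hvw
  by_cases hv : v ∈ Set.range n.vmap <;> by_cases hw : w ∈ Set.range n.vmap <;>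
    simp only [pushoutVmap, hv, hw, dite_true, dite_false, Sum.inl.injEq, Sum.inr.injEq,
      reduceCtorEq, Subtype.mk.injEq] at hvw
  · rw [← hv.choose_spec, ← hw.choose_spec, hm hvw]
  · exact hvw

theorem mem_range_vmap_of_pushoutVmap_eq_inl {v : C.V} {b : B.V}
    (h : pushoutVmap m n v = Sum.inl b) : v ∈ Set.range n.vmap := by
  by_contra hv
  rw [pushoutVmap_of_notMem_range hv] at h
  exact Sum.inr_ne_inl h

theorem mem_range_emap_of_map_pushoutVmap_eq_map_inl (hner : n.EdgeReflecting) {x : C.E}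
    {s : Sym2 B.V} (h : Sym2.map (pushoutVmap m n) (C.inc x) = Sym2.map Sum.inl s) :
    x ∈ Set.range n.emap := by
  refine hner x fun v hv => ?_
  have hψv : pushoutVmap m n v ∈ Sym2.map Sum.inl s := h ▸ Sym2.mem_map.2 ⟨v, hv, rfl⟩
  obtain ⟨b, -, hb⟩ := Sym2.mem_map.1 hψv
  exact mem_range_vmap_of_pushoutVmap_eq_inl hb.symm

end MG

theorem mg_pushout_of_edgeReflecting_isSimple_general (A B C : MG)
    (hB : B.IsSimple) (hC : C.IsSimple)
    (m : A.Hom B) (n : A.Hom C)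
    (hm : m.Injective)
    (hner : n.EdgeReflecting) :
    (MG.pushout m n).IsSimple :=
  Function.Injective.sumElim ((Sym2.map.injective Sum.inl_injective).comp hB)
    ((Sym2.map.injective (MG.pushoutVmap_injective hm.1)).comp
      (hC.comp Subtype.val_injective))
    fun _ x h => x.2 (MG.mem_range_emap_of_map_pushoutVmap_eq_map_inl hner h.symm)

/-- **Pushouts of spans of edge-reflecting monos preserve simplicity.** If `A`, `B`, `C`
are simple finite undirected multigraphs and `m : A → B`, `n : A → C` are injective,
edge-reflecting homomorphisms, then the pushout multigraph `D` is simple, i.e., its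
incidence map is injective. -/
theorem mg_pushout_of_edgeReflecting_isSimple (A B C : MG)
    (hA : A.IsSimple) (hB : B.IsSimple) (hC : C.IsSimple)
    (m : A.Hom B) (n : A.Hom C)
    (hm : m.Injective) (hn : n.Injective)
    (hmer : m.EdgeReflecting) (hner : n.EdgeReflecting) :
    (MG.pushout m n).IsSimple :=
  mg_pushout_of_edgeReflecting_isSimple_general A B C hB hC m n hm hner
end

section
/- Let A be a finite undirected multigraph with an edge e ∈ E_A whose endpoints u ≠ v are such that V_A = V₁ ⊔ V₂ with u ∈ V₁, v ∈ V₂ and every edge of A other than e has both endpoints in V₁ or both in V₂ (e is a bridge); write A₁, A₂ for the induced subgraphs on V₁, V₂, and A∖e for the multigraph with vertex set V_A and edge set E_A ∖ {e}, so A∖e = A₁ + A₂. Let β₁ : A₁ → B₁ and β₂ : A₂ → B₂ be injective homomorphisms, β : A∖e → B₁ + B₂ their disjoint union, and α : A∖e → A the evident inclusion homomorphism. Then for every finite undirected multigraph X' and all injective homomorphisms x' : A∖e → X', a' : X' → A, b' : X' → B₁ + B₂ satisfying a' ∘ x' = α and b' ∘ x' = β, the homomorphism x' is an isomorphism (both its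 vertex component and its edge component are bijective). -/
namespace MG

/-- The disjoint union (sum) of two finite undirected multigraphs. -/
def sum (G H : MG) : MG where
  V := G.V ⊕ H.V
  E := G.E ⊕ H.E
  finV := by have := G.finV; have := H.finV; exact inferInstance
  finE := by have := G.finE; have := H.finE; exact inferInstance
  inc := Sum.elim (fun e => Sym2.map Sum.inl (G.inc e)) (fun e => Sym2.map Sum.inr (H.inc e))

/-- The multigraph `G ∖ e` obtained from `G` by deleting the edge `e` (keeping all
vertices). -/
def deleteEdge (G : MG) (e : G.E) : MG where
  V := G.V
  E := {x : G.E // x ≠ e}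
  finV := G.finV
  finE := by have := G.finE; exact inferInstance
  inc := fun x => G.inc x.val

/-- The evident inclusion homomorphism `G ∖ e → G`. -/
def deleteEdgeHom (G : MG) (e : G.E) : (G.deleteEdge e).Hom G where
  vmap := id
  emap := Subtype.val
  comm := by intro x; simp [deleteEdge, Sym2.map_id]

/-- The multigraph obtained from `G` by adding one new edge with endpoints `a` and `b`. -/
def addEdge (G : MG) (a b : G.V) : MG where
  V := G.V
  E := Option G.E
  finV := G.finV
  finE := by have := G.finE; have : Fintype G.E := Fintype.ofFinite _; exact inferInstance
  inc := fun x => x.elim s(a, b) G.inc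

/-- The evident inclusion homomorphism from `G` into `G` with one extra edge added. -/
def addEdgeHom (G : MG) (a b : G.V) : G.Hom (G.addEdge a b) where
  vmap := id
  emap := some
  comm := by intro x; simp [addEdge, Sym2.map_id]

end MG

theorem MG.sum_inc_ne_inl_inr (G H : MG) (f : (G.sum H).E) (a : G.V) (b : H.V) :
    (G.sum H).inc f ≠ s(Sum.inl a, Sum.inr b) := by
  rcases f with f | f <;> intro h
  · have hb : (Sum.inr b : G.V ⊕ H.V) ∈ Sym2.map Sum.inl (G.inc f) := by
      rw [show Sym2.map Sum.inl (G.inc f) = _ from h]; exact Sym2.mem_mk_right _ _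
    obtain ⟨_, _, hw⟩ := Sym2.mem_map.mp hb
    exact Sum.inl_ne_inr hw
  · have ha : (Sum.inl a : G.V ⊕ H.V) ∈ Sym2.map Sum.inr (H.inc f) := by
      rw [show Sym2.map Sum.inr (H.inc f) = _ from h]; exact Sym2.mem_mk_left _ _
    obtain ⟨_, _, hw⟩ := Sym2.mem_map.mp ha
    exact Sum.inr_ne_inl hw

theorem MG.Hom.inc_eq_map_inc_emap {G X : MG} (a : X.Hom G) {s : G.V → X.V}
    (hs : Function.LeftInverse s a.vmap) (f : X.E) :
    X.inc f = Sym2.map s (G.inc (a.emap f)) := by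
  rw [a.comm, Sym2.map_map, hs.comp_eq_id, Sym2.map_id, id_eq]

theorem mg_bridge_span_factor_iso_general (A B₁ B₂ : MG) (e : A.E) (P : A.V → Prop) (u v : A.V)
    (hinc : A.inc e = s(u, v)) (hu : P u) (hv : ¬ P v)
    (β : (A.deleteEdge e).Hom (B₁.sum B₂))
    (hβ₁ : ∀ w : A.V, P w → ∃ b : B₁.V, β.vmap w = Sum.inl b)
    (hβ₂ : ∀ w : A.V, ¬ P w → ∃ b : B₂.V, β.vmap w = Sum.inr b)
    (X' : MG) (x' : (A.deleteEdge e).Hom X') (a' : X'.Hom A) (b' : X'.Hom (B₁.sum B₂))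
    (ha' : a'.Injective)
    (hax : a'.comp x' = A.deleteEdgeHom e) (hbx : b'.comp x' = β) :
    x'.IsIso := by
  have hxv : Function.LeftInverse a'.vmap x'.vmap := congrFun (congrArg MG.Hom.vmap hax)
  have hxe : ∀ x, a'.emap (x'.emap x) = x.val := congrFun (congrArg MG.Hom.emap hax)
  have hbv : ∀ w : A.V, b'.vmap (x'.vmap w) = β.vmap w := congrFun (congrArg MG.Hom.vmap hbx)
  have hav : Function.LeftInverse x'.vmap a'.vmap := hxv.rightInverse_of_injective ha'.1
  have hne : ∀ f, a'.emap f ≠ e := by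
    intro f hf
    obtain ⟨b₁, hb₁⟩ := hβ₁ u hu
    obtain ⟨b₂, hb₂⟩ := hβ₂ v hv
    have hf' : X'.inc f = s(x'.vmap u, x'.vmap v) := by
      rw [a'.inc_eq_map_inc_emap hav, hf, hinc]; rfl
    apply MG.sum_inc_ne_inl_inr B₁ B₂ (b'.emap f) b₁ b₂
    rw [b'.comm, hf', Sym2.map_mk, hbv, hbv, hb₁, hb₂]; rfl
  refine ⟨⟨hxv.injective, hav.surjective⟩, fun x y h => Subtype.ext ?_, fun f => ?_⟩
  · rw [← hxe x, ← hxe y, h]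
  · exact ⟨⟨a'.emap f, hne f⟩, ha'.2 (hxe _)⟩

/-- **Uniqueness of the span factorization for a bridge.** Let `e` be a bridge of `A`
with endpoints `u ≠ v` separated by the partition `P` of the vertices (so that
`A ∖ e = A₁ + A₂`), let `β : A ∖ e → B₁ + B₂` be the disjoint union of injective
homomorphisms `β₁ : A₁ → B₁` and `β₂ : A₂ → B₂` (encoded by the hypotheses that `β` is
injective and maps the two parts of the partition into the two summands), and let
`α : A ∖ e → A` be the inclusion. Then for every `X'` and all injective homomorphisms
`x' : A ∖ e → X'`, `a' : X' → A`, `b' : X' → B₁ + B₂` with `a' ∘ x' = α` and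
`b' ∘ x' = β`, the homomorphism `x'` is an isomorphism. -/
theorem mg_bridge_span_factor_iso (A B₁ B₂ : MG) (e : A.E) (P : A.V → Prop) (u v : A.V)
    (hinc : A.inc e = s(u, v)) (huv : u ≠ v) (hu : P u) (hv : ¬ P v)
    (hbridge : ∀ x : A.E, x ≠ e → (∀ w ∈ A.inc x, P w) ∨ (∀ w ∈ A.inc x, ¬ P w))
    (β : (A.deleteEdge e).Hom (B₁.sum B₂)) (hβ : β.Injective)
    (hβ₁ : ∀ w : A.V, P w → ∃ b : B₁.V, β.vmap w = Sum.inl b)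
    (hβ₂ : ∀ w : A.V, ¬ P w → ∃ b : B₂.V, β.vmap w = Sum.inr b)
    (X' : MG) (x' : (A.deleteEdge e).Hom X') (a' : X'.Hom A) (b' : X'.Hom (B₁.sum B₂))
    (hx' : x'.Injective) (ha' : a'.Injective) (hb' : b'.Injective)
    (hax : a'.comp x' = A.deleteEdgeHom e) (hbx : b'.comp x' = β) :
    x'.IsIso :=
  mg_bridge_span_factor_iso_general A B₁ B₂ e P u v hinc hu hv β hβ₁ hβ₂ X' x' a' b' ha' hax hbx
end

section
/- Let ν₊ ∈ ℝ and let ν₋, ε₊, ε₋ ∈ ℝ be strictly positive. Set α = ε₋ + ε₊ + 2ν₋, β = ε₋ + ε₊ + ν₋, κ = ε₋ + ν₋, λ = ε₋ + ε₊, ω = ε₋ + 2ν₋, and define f₁, f₂, f₃ : ℝ → ℝ by f₁(t) = (ν₊/ν₋)(1 − e^{−ν₋ t}), f₂(t) = (ν₊² e^{−α t} / (2 α β λ ν₋²)) · (α β ε₋ e^{λ t} + 2 ε₊ ν₋² − 2 α κ λ e^{β t} + β λ ω e^{α t}), and f₃(t) = (ε₊ ν₊² e^{−α t} / (2 α β λ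 ν₋²)) · (α β e^{λ t} − 2 α λ e^{β t} + β λ e^{α t} − 2 ν₋²). Then f₁(0) = f₂(0) = f₃(0) = 0, and for every t ∈ ℝ the functions are differentiable with f₁′(t) = ν₊ − ν₋ f₁(t), f₂′(t) = ν₊ f₁(t) − (2ν₋ + ε₊) f₂(t) + ε₋ f₃(t), and f₃′(t) = ε₊ f₂(t) − (2ν₋ + ε₋) f₃(t). -/
/-!
Multiplying out the prefactor `e^{-αt}`, and using `λ = α - 2ν₋` and `β = α - ν₋`, each
`fᵢ` is a constant multiple of a combination `a + b e^{-ν₋t} + c e^{-2ν₋t} + d e^{-αt}`.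
Such combinations are closed under differentiation, which scales each mode by its exponent,
so every equation of the system becomes an algebraic identity between the coefficients
of the four modes.
-/

open Real

noncomputable def expModes (μ α a b c d t : ℝ) : ℝ :=
  a + b * exp (-μ * t) + c * exp (-(2 * μ) * t) + d * exp (-α * t)

lemma hasDerivAt_exp_mul (r t : ℝ) : HasDerivAt (fun s => exp (r * s)) (r * exp (r * t)) t := by
  simpa [mul_comm] using ((hasDerivAt_id t).const_mul r).exp

lemma hasDerivAt_expModes (μ α a b c d t : ℝ) :
    HasDerivAt (expModes μ α a b c d) (expModes μ α 0 (-μ * b) (-(2 * μ) * c) (-α * d) t) t := by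
  have h := ((((hasDerivAt_const t a).add ((hasDerivAt_exp_mul (-μ) t).const_mul b)).add
    ((hasDerivAt_exp_mul (-(2 * μ)) t).const_mul c)).add ((hasDerivAt_exp_mul (-α) t).const_mul d))
  exact h.congr_deriv (by simp only [expModes]; ring)

lemma hasDerivAt_of_eq_mul_expModes {f : ℝ → ℝ} {K μ α a b c d : ℝ}
    (hf : ∀ t, f t = K * expModes μ α a b c d t) (t : ℝ) :
    HasDerivAt f (K * expModes μ α 0 (-μ * b) (-(2 * μ) * c) (-α * d) t) t := by
  rw [funext hf]
  exact (hasDerivAt_expModes μ α a b c d t).const_mul K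

lemma expModes_zero (μ α a b c d : ℝ) : expModes μ α a b c d 0 = a + b + c + d := by
  simp [expModes]

lemma exp_neg_mul_mul_eq_expModes {μ α β lam : ℝ} (hlam : lam = α - 2 * μ) (hβ : β = α - μ)
    (a b c d t : ℝ) :
    exp (-α * t) * (c * exp (lam * t) + b * exp (β * t) + a * exp (α * t) + d) =
      expModes μ α a b c d t := by
  have hα : exp (-α * t) * exp (α * t) = 1 := by rw [← exp_add]; simp
  have hlam' : exp (lam * t) = exp (-(2 * μ) * t) * exp (α * t) := by rw [← exp_add, hlam]; ring_nf
  have hβ' : exp (β * t) = exp (-μ * t) * exp (α * t) := by rw [← exp_add, hβ]; ring_nf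
  rw [expModes, hlam', hβ']
  linear_combination (c * exp (-(2 * μ) * t) + b * exp (-μ * t) + a) * hα

/-- **Closed-form solution of the moment-evolution ODE system.** With strictly positive
rates `ν₋, ε₊, ε₋` (and `ν₊ ∈ ℝ`) and the abbreviations `α = ε₋ + ε₊ + 2ν₋`,
`β = ε₋ + ε₊ + ν₋`, `κ = ε₋ + ν₋`, `λ = ε₋ + ε₊`, `ω = ε₋ + 2ν₋`, the explicit
functions `f₁, f₂, f₃` vanish at `t = 0` and satisfy, for all `t`,
`f₁' = ν₊ − ν₋ f₁`, `f₂' = ν₊ f₁ − (2ν₋ + ε₊) f₂ + ε₋ f₃`, and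
`f₃' = ε₊ f₂ − (2ν₋ + ε₋) f₃`. -/
theorem moment_ode_closed_form_solution
    (νp νm εp εm : ℝ) (hνm : 0 < νm) (hεp : 0 < εp) (hεm : 0 < εm)
    (α β κ lam ω : ℝ)
    (hα : α = εm + εp + 2 * νm) (hβ : β = εm + εp + νm) (hκ : κ = εm + νm)
    (hlam : lam = εm + εp) (hω : ω = εm + 2 * νm)
    (f₁ f₂ f₃ : ℝ → ℝ)
    (hf₁ : ∀ t : ℝ, f₁ t = (νp / νm) * (1 - exp (-νm * t)))
    (hf₂ : ∀ t : ℝ, f₂ t =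
      (νp ^ 2 * exp (-α * t) / (2 * α * β * lam * νm ^ 2)) *
        (α * β * εm * exp (lam * t) + 2 * εp * νm ^ 2
          - 2 * α * κ * lam * exp (β * t) + β * lam * ω * exp (α * t)))
    (hf₃ : ∀ t : ℝ, f₃ t =
      (εp * νp ^ 2 * exp (-α * t) / (2 * α * β * lam * νm ^ 2)) *
        (α * β * exp (lam * t) - 2 * α * lam * exp (β * t)
          + β * lam * exp (α * t) - 2 * νm ^ 2)) :
    f₁ 0 = 0 ∧ f₂ 0 = 0 ∧ f₃ 0 = 0 ∧
    ∀ t : ℝ,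
      HasDerivAt f₁ (νp - νm * f₁ t) t ∧
      HasDerivAt f₂ (νp * f₁ t - (2 * νm + εp) * f₂ t + εm * f₃ t) t ∧
      HasDerivAt f₃ (εp * f₂ t - (2 * νm + εm) * f₃ t) t := by
  have hlam' : lam = α - 2 * νm := by linarith
  have hβ' : β = α - νm := by linarith
  have e₁ (t : ℝ) : f₁ t = νp / νm * expModes νm α 1 (-1) 0 0 t := by
    simp only [hf₁, expModes]; ring
  have e₂ (t : ℝ) : f₂ t = νp ^ 2 / (2 * α * β * lam * νm ^ 2) *
      expModes νm α (β * lam * ω) (-(2 * α * κ * lam)) (α * β * εm) (2 * εp * νm ^ 2) t := by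
    rw [hf₂, ← exp_neg_mul_mul_eq_expModes hlam' hβ']; ring
  have e₃ (t : ℝ) : f₃ t = εp * νp ^ 2 / (2 * α * β * lam * νm ^ 2) *
      expModes νm α (β * lam) (-(2 * α * lam)) (α * β) (-(2 * νm ^ 2)) t := by
    rw [hf₃, ← exp_neg_mul_mul_eq_expModes hlam' hβ']; ring
  have hνm0 := hνm.ne'
  have hα0 : α ≠ 0 := by rw [hα]; positivity
  have hβ0 : β ≠ 0 := by rw [hβ]; positivity
  have hlam0 : lam ≠ 0 := by rw [hlam]; positivity
  refine ⟨?_, ?_, ?_, fun t => ⟨?_, ?_, ?_⟩⟩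
  · simp [e₁, expModes_zero]
  · rw [e₂, expModes_zero]; subst hα hβ hκ hlam hω; ring
  · rw [e₃, expModes_zero]; subst hα hβ hlam; ring
  · convert hasDerivAt_of_eq_mul_expModes e₁ t using 1
    rw [e₁]; simp only [expModes]; field_simp; ring
  · convert hasDerivAt_of_eq_mul_expModes e₂ t using 1
    rw [e₁, e₂, e₃]; simp only [expModes]; subst hα hβ hκ hlam hω; field_simp; ring
  · convert hasDerivAt_of_eq_mul_expModes e₃ t using 1
    rw [e₂, e₃]; simp only [expModes]; subst hα hβ hκ hlam hω; field_simp; ring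
end
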